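/- In the group G_m generated by CNOT, X, and Z_m gates on n qubits (modulo global phases ⟨ω_m⟩), the subgroup W_m of diagonal matrices and the subgroup Π of permutation matrices satisfy: W_m ∩ Π = {I}, G_m = Π·W_m, and W_m is normal in G_m; hence G_m ≅ W_m ⋊ Π. -/

import Mathlib

open scoped Matrix

/-- The CNOT gate `Λ_{ij}(X)` with control `i` and target `j`. -/
noncomputable def cnotMat (n : ℕ) (i j : Fin n) :
    Matrix (Fin n → ZMod 2) (Fin n → ZMod 2) ℂ :=
  Matrix.of fun r c => if r = Function.update c j (c i + c j) then 1 else 0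

/-- The bit-flip gate `X(j)`. -/
noncomputable def xMat (n : ℕ) (j : Fin n) :
    Matrix (Fin n → ZMod 2) (Fin n → ZMod 2) ℂ :=
  Matrix.of fun r c => if r = Function.update c j (c j + 1) then 1 else 0

/-- The single-qubit `m`-phase gate `Z_m(j)`: `|b⟩ ↦ ω_m^{b_j}|b⟩`,
`ω_m = e^{2πi/m}`. -/
noncomputable def zMat (n m : ℕ) (j : Fin n) :
    Matrix (Fin n → ZMod 2) (Fin n → ZMod 2) ℂ :=
  Matrix.diagonal fun b => Complex.exp (2 * Real.pi * Complex.I / m) ^ (b j).val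

/-- The subgroup `Π` of permutation matrices, generated by CNOT and `X` gates. -/
def permGroup (n : ℕ) : Subgroup (GL (Fin n → ZMod 2) ℂ) :=
  Subgroup.closure
    {g | (∃ i j, i ≠ j ∧
            (g : Matrix (Fin n → ZMod 2) (Fin n → ZMod 2) ℂ) = cnotMat n i j) ∨
         (∃ j, (g : Matrix (Fin n → ZMod 2) (Fin n → ZMod 2) ℂ) = xMat n j)}

/-- The CNOT-dihedral matrix group `G_m = ⟨Λ_{ij}(X), X(j), Z_m(j)⟩`. -/
def GmGroup (n m : ℕ) : Subgroup (GL (Fin n → ZMod 2) ℂ) :=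
  Subgroup.closure
    {g | (∃ i j, i ≠ j ∧
            (g : Matrix (Fin n → ZMod 2) (Fin n → ZMod 2) ℂ) = cnotMat n i j) ∨
         (∃ j, (g : Matrix (Fin n → ZMod 2) (Fin n → ZMod 2) ℂ) = xMat n j) ∨
         (∃ j, (g : Matrix (Fin n → ZMod 2) (Fin n → ZMod 2) ℂ) = zMat n m j)}

/-- The subgroup of `GL(2ⁿ, ℂ)` consisting of (invertible) diagonal matrices. -/
def diagGL (n : ℕ) : Subgroup (GL (Fin n → ZMod 2) ℂ) where
  carrier := {g | ∃ d, (g : Matrix (Fin n → ZMod 2) (Fin n → ZMod 2) ℂ) =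
    Matrix.diagonal d}
  one_mem' := ⟨fun _ => 1, by simp⟩
  mul_mem' := by
    rintro a b ⟨d, hd⟩ ⟨e, he⟩
    exact ⟨fun i => d i * e i, by
      simp [Units.val_mul, hd, he, Matrix.diagonal_mul_diagonal]⟩
  inv_mem' := by
    rintro g ⟨d, hd⟩
    have h1 : Matrix.diagonal d *
        ((g⁻¹ : GL (Fin n → ZMod 2) ℂ) :
          Matrix (Fin n → ZMod 2) (Fin n → ZMod 2) ℂ) = 1 := by
      rw [← hd, ← Units.val_mul, mul_inv_cancel, Units.val_one]
    have key : ∀ i j, d i *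
        ((g⁻¹ : GL (Fin n → ZMod 2) ℂ) :
          Matrix (Fin n → ZMod 2) (Fin n → ZMod 2) ℂ) i j =
        (1 : Matrix (Fin n → ZMod 2) (Fin n → ZMod 2) ℂ) i j := by
      intro i j
      have h2 := congrArg (fun M : Matrix (Fin n → ZMod 2) (Fin n → ZMod 2) ℂ
        => M i j) h1
      simpa [Matrix.diagonal_mul] using h2
    refine ⟨fun i => (d i)⁻¹, ?_⟩
    ext i j
    by_cases hij : i = j
    · subst hij
      have hii := key i i
      rw [Matrix.one_apply_eq] at hii
      simp [Matrix.diagonal_apply_eq, eq_inv_of_mul_eq_one_right hii]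
    · have hij' := key i j
      rw [Matrix.one_apply_ne hij] at hij'
      have hdne : d i ≠ 0 := by
        intro h0
        have hii := key i i
        rw [Matrix.one_apply_eq, h0, zero_mul] at hii
        exact zero_ne_one hii
      rcases mul_eq_zero.mp hij' with h | h
      · exact absurd h hdne
      · simp [Matrix.diagonal_apply_ne _ hij, h]

/-- The subgroup `W_m` of diagonal matrices of `G_m`. -/
def WmGroup (n m : ℕ) : Subgroup (GL (Fin n → ZMod 2) ℂ) := diagGL n ⊓ GmGroup n m

/-!
CNOT and `X` gates are permutation matrices, and conjugating `diagonal d` by the permutation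
matrix of `σ` gives `diagonal (d ∘ σ⁻¹)`; so every generator of `G_m` normalizes the diagonal
subgroup, hence `W_m = diag ∩ G_m` is normal in `G_m`. As `G_m` is generated by `Π` and by
elements of `W_m`, this gives `G_m = W_m Π`. A diagonal permutation matrix is the identity, so
`W_m ∩ Π = 1` and multiplication `W_m ⋊ Π → G_m` is an isomorphism.
-/

open Matrix Equiv Subgroup

namespace SemidirectProduct

variable {G : Type*} [Group G] {H K : Subgroup G}

theorem monoidHomSubgroup_injective (h : K ≤ normalizer (H : Set G)) (hd : Disjoint H K) :
    Function.Injective (monoidHomSubgroup h) := by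
  intro x y hxy
  have hpair :=
    mul_injective_of_disjoint hd (a₁ := (x.left, x.right)) (a₂ := (y.left, y.right)) hxy
  simp only [Prod.mk.injEq] at hpair
  exact SemidirectProduct.ext hpair.1 hpair.2

theorem range_monoidHomSubgroup (h : K ≤ normalizer (H : Set G)) :
    (monoidHomSubgroup h).range = H ⊔ K := by
  refine SetLike.coe_injective ?_
  rw [coe_mul_of_right_le_normalizer_left H K h, MonoidHom.coe_range]
  ext g
  constructor
  · rintro ⟨x, rfl⟩
    exact Set.mul_mem_mul x.left.2 x.right.2
  · rintro ⟨a, ha, b, hb, rfl⟩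
    exact ⟨⟨⟨a, ha⟩, ⟨b, hb⟩⟩, rfl⟩

noncomputable def mulEquivSupOfDisjoint (h : K ≤ normalizer (H : Set G)) (hd : Disjoint H K) :
    H ⋊[(H.normalizerMonoidHom).comp (inclusion h)] K ≃* ↥(H ⊔ K) :=
  (MonoidHom.ofInjective (monoidHomSubgroup_injective h hd)).trans
    (MulEquiv.subgroupCongr (range_monoidHomSubgroup h))

end SemidirectProduct

section PermMatrix

variable {ι R : Type*} [Fintype ι] [DecidableEq ι] [NonAssocSemiring R]

theorem Matrix.permMatrixHom_apply_apply (σ : Perm ι) (r c : ι) :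
    permMatrixHom σ r c = if r = σ c then (1 : R) else 0 := by
  simp [PEquiv.toMatrix_apply, Equiv.symm_apply_eq]

theorem Matrix.permMatrixHom_mul_diagonal_mul_inv (σ : Perm ι) (d : ι → R) :
    permMatrixHom σ * diagonal d * permMatrixHom σ⁻¹ = diagonal (d ∘ ⇑σ⁻¹) := by
  rw [permMatrixHom_apply, permMatrixHom_apply, inv_inv, PEquiv.toMatrix_toPEquiv_mul,
    PEquiv.mul_toMatrix_toPEquiv, submatrix_submatrix]
  exact submatrix_diagonal_equiv d σ⁻¹

theorem Matrix.eq_one_of_permMatrixHom_eq_diagonal [Nontrivial R] {σ : Perm ι} {d : ι → R}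
    (h : permMatrixHom σ = diagonal d) : σ = 1 := by
  ext c
  by_contra hc
  replace hc : σ c ≠ c := hc
  simpa [permMatrixHom_apply_apply, diagonal_apply_ne _ hc] using congrFun (congrFun h (σ c)) c

noncomputable abbrev Matrix.permMatrixGL (R : Type*) [Semiring R] : Perm ι →* GL ι R :=
  (permMatrixHom (n := ι) (R := R)).toHomUnits

end PermMatrix

section Involutions

variable {ι R : Type*} [DecidableEq ι] [Ring R] [CharP R 2]

theorem involutive_update_add_apply {i j : ι} (h : i ≠ j) :
    Function.Involutive fun c : ι → R => Function.update c j (c i + c j) := by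
  intro c
  simp [Function.update_of_ne h, ← add_assoc, CharTwo.add_self_eq_zero]

theorem involutive_update_add_one (j : ι) :
    Function.Involutive fun c : ι → R => Function.update c j (c j + 1) := by
  intro c
  simp [add_assoc, CharTwo.add_self_eq_zero]

end Involutions

theorem cnotMat_eq_permMatrixHom {n : ℕ} {i j : Fin n} (h : i ≠ j) :
    cnotMat n i j = permMatrixHom (involutive_update_add_apply (R := ZMod 2) h).toPerm := by
  ext r c
  rw [permMatrixHom_apply_apply]
  -- the two sides differ only in their `Decidable` instances
  congr

theorem xMat_eq_permMatrixHom (n : ℕ) (j : Fin n) :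
    xMat n j = permMatrixHom (involutive_update_add_one (R := ZMod 2) j).toPerm := by
  ext r c
  rw [permMatrixHom_apply_apply]
  congr

theorem permGroup_le_range_permMatrixGL (n : ℕ) : permGroup n ≤ (permMatrixGL ℂ).range := by
  rw [permGroup, closure_le]
  rintro g (⟨i, j, hij, hg⟩ | ⟨j, hg⟩)
  · exact ⟨_, Units.ext (hg.trans (cnotMat_eq_permMatrixHom hij)).symm⟩
  · exact ⟨_, Units.ext (hg.trans (xMat_eq_permMatrixHom n j)).symm⟩

theorem range_permMatrixGL_le_normalizer_diagGL (n : ℕ) :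
    (permMatrixGL ℂ).range ≤ normalizer (diagGL n : Set (GL (Fin n → ZMod 2) ℂ)) := by
  have conj_mem : ∀ σ, ∀ w ∈ diagGL n,
      permMatrixGL ℂ σ * w * (permMatrixGL ℂ σ)⁻¹ ∈ diagGL n := by
    rintro σ w ⟨d, hd⟩
    refine ⟨d ∘ ⇑σ⁻¹, ?_⟩
    rw [Units.val_mul, Units.val_mul, hd, ← map_inv, MonoidHom.coe_toHomUnits,
      MonoidHom.coe_toHomUnits, permMatrixHom_mul_diagonal_mul_inv]
  rintro _ ⟨σ, rfl⟩ w
  refine ⟨conj_mem σ w, fun h => ?_⟩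
  simpa [mul_assoc] using conj_mem σ⁻¹ _ h

theorem diagGL_inf_range_permMatrixGL (n : ℕ) : diagGL n ⊓ (permMatrixGL ℂ).range = ⊥ := by
  rw [eq_bot_iff]
  rintro _ ⟨⟨d, hd⟩, σ, rfl⟩
  rw [mem_bot, eq_one_of_permMatrixHom_eq_diagonal hd, map_one]

section CNOTDihedral

variable (n m : ℕ)

theorem permGroup_le_GmGroup : permGroup n ≤ GmGroup n m :=
  closure_mono fun _ hg => hg.imp_right Or.inl

theorem GmGroup_eq_sup : GmGroup n m = WmGroup n m ⊔ permGroup n := by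
  refine le_antisymm ?_ (sup_le inf_le_right (permGroup_le_GmGroup n m))
  rw [GmGroup, closure_le]
  rintro g (hg | hg | ⟨j, hg⟩)
  · exact mem_sup_right (subset_closure (Or.inl hg))
  · exact mem_sup_right (subset_closure (Or.inr hg))
  · exact mem_sup_left ⟨⟨_, hg⟩, subset_closure (Or.inr (Or.inr ⟨j, hg⟩))⟩

theorem GmGroup_le_normalizer_WmGroup :
    GmGroup n m ≤ normalizer (WmGroup n m : Set (GL (Fin n → ZMod 2) ℂ)) := by
  have hdiag : GmGroup n m ≤ normalizer (diagGL n : Set (GL (Fin n → ZMod 2) ℂ)) := by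
    rw [GmGroup_eq_sup]
    exact sup_le (inf_le_left.trans le_normalizer)
      ((permGroup_le_range_permMatrixGL n).trans (range_permMatrixGL_le_normalizer_diagGL n))
  exact (le_inf hdiag le_normalizer).trans inf_normalizer_le_normalizer_inf

theorem WmGroup_inf_permGroup : WmGroup n m ⊓ permGroup n = ⊥ :=
  eq_bot_iff.2 <| (inf_le_inf inf_le_left (permGroup_le_range_permMatrixGL n)).trans
    (diagGL_inf_range_permMatrixGL n).le

end CNOTDihedral

theorem Gm_semidirect_general (n m : ℕ) :
    (WmGroup n m ⊓ permGroup n = ⊥) ∧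
    (∀ g ∈ GmGroup n m, ∃ p ∈ permGroup n, ∃ w ∈ WmGroup n m, g = p * w) ∧
    (∀ g ∈ GmGroup n m, ∀ w ∈ WmGroup n m, g * w * g⁻¹ ∈ WmGroup n m) ∧
    (∃ φ : permGroup n →* MulAut (WmGroup n m),
      Nonempty (GmGroup n m ≃* SemidirectProduct (WmGroup n m) (permGroup n) φ)) := by
  have hnorm : permGroup n ≤ normalizer (WmGroup n m : Set (GL (Fin n → ZMod 2) ℂ)) :=
    (permGroup_le_GmGroup n m).trans (GmGroup_le_normalizer_WmGroup n m)
  refine ⟨WmGroup_inf_permGroup n m, fun g hg => ?_, fun g hg w hw => ?_, _,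
    ⟨(MulEquiv.subgroupCongr (GmGroup_eq_sup n m)).trans
      (SemidirectProduct.mulEquivSupOfDisjoint hnorm
        (disjoint_iff.2 (WmGroup_inf_permGroup n m))).symm⟩⟩
  · have hg' : g ∈ (↑(permGroup n ⊔ WmGroup n m) : Set (GL (Fin n → ZMod 2) ℂ)) := by
      rwa [sup_comm, ← GmGroup_eq_sup]
    rw [coe_mul_of_left_le_normalizer_right _ _ hnorm] at hg'
    obtain ⟨p, hp, w, hw, rfl⟩ := hg'
    exact ⟨p, hp, w, hw, rfl⟩
  · exact (mem_normalizer_iff.mp (GmGroup_le_normalizer_WmGroup n m hg) w).mp hw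

/-- Lemma 1 (semidirect-product structure of the CNOT-dihedral group): in the
group `G_m` generated by CNOT, `X`, and `Z_m` gates on `n` qubits, the subgroup
`W_m` of diagonal matrices and the subgroup `Π` of permutation matrices satisfy
`W_m ∩ Π = {I}`, `G_m = Π·W_m`, and `W_m ◁ G_m`; hence `G_m ≅ W_m ⋊ Π`.
(Global phase factors `⟨ω_m⟩` are diagonal, hence absorbed into `W_m`.) -/
theorem Gm_semidirect (n m : ℕ) (hm : 0 < m) :
    (WmGroup n m ⊓ permGroup n = ⊥) ∧
    (∀ g ∈ GmGroup n m, ∃ p ∈ permGroup n, ∃ w ∈ WmGroup n m, g = p * w) ∧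
    (∀ g ∈ GmGroup n m, ∀ w ∈ WmGroup n m, g * w * g⁻¹ ∈ WmGroup n m) ∧
    (∃ φ : permGroup n →* MulAut (WmGroup n m),
      Nonempty (GmGroup n m ≃* SemidirectProduct (WmGroup n m) (permGroup n) φ)) :=
  Gm_semidirect_general n m
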